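/- arXiv:1911.08189 — 5 statements merged into one kernel-verified Lean document; each statement's English description precedes it below -/
import Mathlib

section
/- For a Ferrer diagram with weakly decreasing row lengths h_1 ≥ h_2 ≥ ... ≥ h_n > 0, the maximum number of non-attacking rooks that can be placed on its cells equals min{ n, min_{1 ≤ j ≤ n} (h_j + j - 1) }. -/
/-- Placements of `r` non-attacking rooks on the cell set `P`. -/
def rookPlacements {α β : Type*} [DecidableEq α] [DecidableEq β]
    (P : Finset (α × β)) (r : ℕ) : Finset (Finset (α × β)) :=
  P.powerset.filter (fun R => R.card = r ∧
    ∀ a ∈ R, ∀ b ∈ R, a ≠ b → a.1 ≠ b.1 ∧ a.2 ≠ b.2)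

/-- The Ferrer diagram with `n` rows, row `i` (0-based) having `h i` cells. -/
def ferrerCells (n : ℕ) (h : ℕ → ℕ) : Finset (ℕ × ℕ) :=
  (Finset.range n).biUnion (fun i => (Finset.range (h i)).image (fun j => (i, j)))

lemma mem_ferrer {n : ℕ} {h : ℕ → ℕ} {p : ℕ × ℕ} :
    p ∈ ferrerCells n h ↔ p.1 < n ∧ p.2 < h p.1 := by
  simp only [ferrerCells, Finset.mem_biUnion, Finset.mem_image, Finset.mem_range]
  constructor
  · rintro ⟨i, hi, j, hj, rfl⟩; exact ⟨hi, hj⟩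
  · rintro ⟨h1, h2⟩; exact ⟨p.1, h1, p.2, h2, rfl⟩

/-- For a Ferrer diagram with weakly decreasing positive row lengths,
the maximum number of non-attacking rooks equals
`min { n, min_{1 ≤ j ≤ n} (h_j + j - 1) }` (0-based: `min n (min_{j<n} (h j + j))`). -/
theorem stmt1 (n : ℕ) (hn : 0 < n) (h : ℕ → ℕ)
    (hdec : ∀ i j : ℕ, i ≤ j → j < n → h j ≤ h i)
    (hpos : ∀ i, i < n → 0 < h i) :
    IsGreatest {r : ℕ | (rookPlacements (ferrerCells n h) r).Nonempty}
      (min n ((Finset.range n).inf' (Finset.nonempty_range_iff.mpr hn.ne')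
        (fun j => h j + j))) := by
  set m := min n ((Finset.range n).inf' (Finset.nonempty_range_iff.mpr hn.ne')
    (fun j => h j + j)) with hm
  have hmn : m ≤ n := min_le_left _ _
  have hmj : ∀ j, j < n → m ≤ h j + j := by
    intro j hj
    exact le_trans (min_le_right _ _)
      (Finset.inf'_le _ (Finset.mem_range.mpr hj))
  constructor
  · -- construct placement
    refine ⟨(Finset.range m).image (fun i => (i, m - 1 - i)), ?_⟩
    rw [rookPlacements, Finset.mem_filter, Finset.mem_powerset]
    refine ⟨?_, ?_, ?_⟩
    · intro p hp
      simp only [Finset.mem_image, Finset.mem_range] at hp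
      obtain ⟨i, hi, rfl⟩ := hp
      have hin : i < n := lt_of_lt_of_le hi hmn
      have := hmj i hin
      have := hpos i hin
      exact mem_ferrer.mpr ⟨hin, by simp; omega⟩
    · rw [Finset.card_image_of_injective _ (fun a b hab => by
        simpa using congrArg Prod.fst hab), Finset.card_range]
    · intro a ha b hb hab
      simp only [Finset.mem_image, Finset.mem_range] at ha hb
      obtain ⟨i, hi, rfl⟩ := ha
      obtain ⟨j, hj, rfl⟩ := hb
      have : i ≠ j := by intro hij; exact hab (by rw [hij])
      constructor <;> simp <;> omega
  · -- upper bound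
    rintro r ⟨R, hR⟩
    rw [rookPlacements, Finset.mem_filter, Finset.mem_powerset] at hR
    obtain ⟨hsub, hcard, hatt⟩ := hR
    subst hcard
    apply le_min
    · -- rows injective into range n
      have : R.card ≤ (Finset.range n).card := by
        apply Finset.card_le_card_of_injOn (fun p => p.1)
        · intro p hp
          exact Finset.mem_range.mpr (mem_ferrer.mp (hsub hp)).1
        · intro a ha b hb hfst
          by_contra hne
          exact (hatt a ha b hb hne).1 hfst
      simpa using this
    · apply Finset.le_inf'
      intro j hj
      rw [Finset.mem_range] at hj
      classical
      rw [← Finset.card_filter_add_card_filter_not (p := fun p : ℕ × ℕ => p.1 < j) (s := R)]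
      have h1 : (R.filter (fun p => p.1 < j)).card ≤ j := by
        have : (R.filter (fun p => p.1 < j)).card ≤ (Finset.range j).card := by
          apply Finset.card_le_card_of_injOn (fun p => p.1)
          · intro p hp
            exact Finset.mem_range.mpr (Finset.mem_filter.mp hp).2
          · intro a ha b hb hfst
            by_contra hne
            exact (hatt a (Finset.mem_filter.mp ha).1 b (Finset.mem_filter.mp hb).1 hne).1 hfst
        simpa using this
      have h2 : (R.filter (fun p => ¬ p.1 < j)).card ≤ h j := by
        have : (R.filter (fun p => ¬ p.1 < j)).card ≤ (Finset.range (h j)).card := by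
          apply Finset.card_le_card_of_injOn (fun p => p.2)
          · intro p hp
            obtain ⟨hpR, hpj⟩ := Finset.mem_filter.mp hp
            obtain ⟨hp1, hp2⟩ := mem_ferrer.mp (hsub hpR)
            exact Finset.mem_range.mpr (lt_of_lt_of_le hp2 (hdec j p.1 (by omega) hp1))
          · intro a ha b hb hsnd
            by_contra hne
            exact (hatt a (Finset.mem_filter.mp ha).1 b (Finset.mem_filter.mp hb).1 hne).2 hsnd
        simpa using this
      omega
end

section
/- Let P be a finite set of cells in an m × n grid such that: (i) for any two columns j, j', if v_j ≤ v_{j'}, where v_j is the number of cells of P in column j, then every row meeting column j also meets column j'; and (ii) the analogous condition holds for rows. Then the bipartite row-column graph F_P of P is isomorphic to a Ferrer graph: after relabelling the columns by weakly decreasing degree and the rows by weakly decreasing degree, the edge set becomes a staircase, i.e., if (T_k, U_l) is an edge then (T_r, U_s) is an edge for all r ≤ k and s ≤ l. -/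
/-- Number of cells of `P` in row `i`. -/
def rowCountF {n m : ℕ} (P : Finset (Fin n × Fin m)) (i : Fin n) : ℕ :=
  (P.filter (fun c => c.1 = i)).card

/-- Number of cells of `P` in column `j`. -/
def colCountF {n m : ℕ} (P : Finset (Fin n × Fin m)) (j : Fin m) : ℕ :=
  (P.filter (fun c => c.2 = j)).card

/-- Let `P` be a finite set of cells in an `m × n` grid such that (i) whenever
column `j` has at most as many cells as column `j'`, every row meeting column `j`
also meets column `j'`, and (ii) the analogous condition for rows. Then, after
relabelling columns and rows in weakly decreasing order of degree, the row-column
bipartite graph of `P` becomes a Ferrer (staircase) graph: if `(τ l, σ k)` is a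
cell then so is `(τ s, σ r)` for all `r ≤ k`, `s ≤ l`. -/
theorem stmt3 (n m : ℕ) (P : Finset (Fin n × Fin m))
    (hcol : ∀ j j' : Fin m, colCountF P j ≤ colCountF P j' →
      ∀ i : Fin n, (i, j) ∈ P → (i, j') ∈ P)
    (hrow : ∀ i i' : Fin n, rowCountF P i ≤ rowCountF P i' →
      ∀ j : Fin m, (i, j) ∈ P → (i', j) ∈ P) :
    ∃ (σ : Equiv.Perm (Fin m)) (τ : Equiv.Perm (Fin n)),
      (∀ k k' : Fin m, k ≤ k' → colCountF P (σ k') ≤ colCountF P (σ k)) ∧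
      (∀ l l' : Fin n, l ≤ l' → rowCountF P (τ l') ≤ rowCountF P (τ l)) ∧
      (∀ (k : Fin m) (l : Fin n), (τ l, σ k) ∈ P →
        ∀ r ≤ k, ∀ s ≤ l, (τ s, σ r) ∈ P) := by
  refine ⟨Fin.revPerm.trans (Tuple.sort (colCountF P)),
          Fin.revPerm.trans (Tuple.sort (rowCountF P)), ?_, ?_, ?_⟩
  · intro k k' hk
    exact Tuple.monotone_sort (colCountF P) (Fin.rev_le_rev.mpr hk)
  · intro l l' hl
    exact Tuple.monotone_sort (rowCountF P) (Fin.rev_le_rev.mpr hl)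
  · intro k l hP r hr s hs
    have h1 := hcol _ _ (Tuple.monotone_sort (colCountF P) (Fin.rev_le_rev.mpr hr)) _ hP
    exact hrow _ _ (Tuple.monotone_sort (rowCountF P) (Fin.rev_le_rev.mpr hs)) _ h1
end

section
/- Let P be an L-convex polyomino (a convex polyomino in which any two cells can be joined by a monotone path of cells with at most one change of direction). Then any maximal rectangle contained in P occurs in a unique position: if R and R' are congruent maximal rectangular subpolyominoes of P of the same width and height, then R = R'. -/
/-- Two cells of `ℤ × ℤ` are adjacent if they share an edge. -/
def CellAdj (a b : ℤ × ℤ) : Prop :=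
  (a.1 = b.1 ∧ (a.2 = b.2 + 1 ∨ b.2 = a.2 + 1)) ∨
  (a.2 = b.2 ∧ (a.1 = b.1 + 1 ∨ b.1 = a.1 + 1))

/-- `P` is an L-convex polyomino: it is row convex, column convex, and any two of
its cells are joined by a path of distinct cells of `P` with at most one change of
direction. Cells are recorded as `(row, column)`. -/
def IsLConvex (P : Finset (ℤ × ℤ)) : Prop :=
  (∀ i j j' j'' : ℤ, (i, j) ∈ P → (i, j'') ∈ P → j ≤ j' → j' ≤ j'' → (i, j') ∈ P) ∧
  (∀ i i' i'' j : ℤ, (i, j) ∈ P → (i'', j) ∈ P → i ≤ i' → i' ≤ i'' → (i', j) ∈ P) ∧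
  (∀ a ∈ P, ∀ b ∈ P, ∃ (k : ℕ) (c : ℕ → ℤ × ℤ),
    c 0 = a ∧ c k = b ∧ (∀ i ≤ k, c i ∈ P) ∧
    (∀ i < k, CellAdj (c i) (c (i + 1))) ∧
    (∀ i j, i ≤ k → j ≤ k → c i = c j → i = j) ∧
    ((Finset.Ioo 0 k).filter (fun i =>
      (c (i - 1)).1 ≠ (c (i + 1)).1 ∧ (c (i - 1)).2 ≠ (c (i + 1)).2)).card ≤ 1)

/-- Number of cells of `P` in row `i`. -/
def rowCount (P : Finset (ℤ × ℤ)) (i : ℤ) : ℕ := (P.filter (fun c => c.1 = i)).card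

/-- Number of cells of `P` in column `j`. -/
def colCount (P : Finset (ℤ × ℤ)) (j : ℤ) : ℕ := (P.filter (fun c => c.2 = j)).card

/-- The `w × h` rectangle of cells with lower-left cell `(x, y)`. -/
def rectCells (x y : ℤ) (w h : ℕ) : Finset (ℤ × ℤ) :=
  ((Finset.range w) ×ˢ (Finset.range h)).image (fun p => (x + (p.1 : ℤ), y + (p.2 : ℤ)))

/-- `R` is a (nonempty) rectangle of cells. -/
def IsRect (R : Finset (ℤ × ℤ)) : Prop :=
  ∃ (x y : ℤ) (w h : ℕ), 0 < w ∧ 0 < h ∧ R = rectCells x y w h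

/-- `R` is a maximal rectangular subpolyomino of `P`. -/
def MaximalRect (P R : Finset (ℤ × ℤ)) : Prop :=
  IsRect R ∧ R ⊆ P ∧ ∀ R', IsRect R' → R' ⊆ P → R ⊆ R' → R = R'


lemma mem_rect {x y : ℤ} {w h : ℕ} {q : ℤ × ℤ} :
    q ∈ rectCells x y w h ↔ x ≤ q.1 ∧ q.1 < x + w ∧ y ≤ q.2 ∧ q.2 < y + h := by
  obtain ⟨i, j⟩ := q
  simp only [rectCells, Finset.mem_image, Finset.mem_product, Finset.mem_range, Prod.mk.injEq,
    Prod.exists]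
  constructor
  · rintro ⟨p1, p2, ⟨h1, h2⟩, h3, h4⟩
    omega
  · rintro ⟨h1, h2, h3, h4⟩
    exact ⟨(i - x).toNat, (j - y).toNat, by constructor <;> omega, by omega, by omega⟩

lemma keystep (p q r : ℤ × ℤ) (h1 : CellAdj p q) (h2 : CellAdj q r) (hne : p ≠ r)
    (hnt : ¬(p.1 ≠ r.1 ∧ p.2 ≠ r.2)) :
    r.1 - q.1 = q.1 - p.1 ∧ r.2 - q.2 = q.2 - p.2 := by
  obtain ⟨p1, p2⟩ := p
  obtain ⟨q1, q2⟩ := q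
  obtain ⟨r1, r2⟩ := r
  simp only [CellAdj, Prod.mk.injEq, ne_eq, not_and, Prod.ext_iff] at *
  omega

lemma segLemma (k : ℕ) (c : ℕ → ℤ × ℤ) (hadj : ∀ i < k, CellAdj (c i) (c (i + 1)))
    (hinj : ∀ i j, i ≤ k → j ≤ k → c i = c j → i = j)
    (m n : ℕ) (hmn : m ≤ n) (hnk : n ≤ k)
    (hnt : ∀ i, m < i → i < n → ¬((c (i - 1)).1 ≠ (c (i + 1)).1 ∧ (c (i - 1)).2 ≠ (c (i + 1)).2)) :
    (c n).1 = (c m).1 ∨ (c n).2 = (c m).2 := by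
  rcases Nat.eq_or_lt_of_le hmn with rfl | hlt
  · exact Or.inl rfl
  have hdir : ∀ i, m ≤ i → i < n →
      ((c (i + 1)).1 - (c i).1 = (c (m + 1)).1 - (c m).1 ∧
       (c (i + 1)).2 - (c i).2 = (c (m + 1)).2 - (c m).2) := by
    intro i hmi
    induction i, hmi using Nat.le_induction with
    | base => intro _; exact ⟨rfl, rfl⟩
    | succ i hmi ih =>
      intro hin
      have hih := ih (by omega)
      have hne : c i ≠ c (i + 1 + 1) := fun he => by
        have := hinj i (i + 1 + 1) (by omega) (by omega) he; omega
      have hK := keystep (c i) (c (i + 1)) (c (i + 1 + 1))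
        (hadj i (by omega)) (hadj (i + 1) (by omega)) hne
        (hnt (i + 1) (by omega) (by omega))
      constructor <;> omega
  have hmk : m < k := by omega
  rcases hadj m hmk with ⟨h1, _⟩ | ⟨h2, _⟩
  · left
    have : ∀ i, m ≤ i → i ≤ n → (c i).1 = (c m).1 := by
      intro i hmi
      induction i, hmi using Nat.le_induction with
      | base => intro _; rfl
      | succ i hmi ih =>
        intro hin
        have := hdir i hmi (by omega)
        have := ih (by omega)
        omega
    exact this n hmn le_rfl
  · right
    have : ∀ i, m ≤ i → i ≤ n → (c i).2 = (c m).2 := by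
      intro i hmi
      induction i, hmi using Nat.le_induction with
      | base => intro _; rfl
      | succ i hmi ih =>
        intro hin
        have := hdir i hmi (by omega)
        have := ih (by omega)
        omega
    exact this n hmn le_rfl

lemma cross {P : Finset (ℤ × ℤ)} (hP : IsLConvex P) {a b : ℤ × ℤ}
    (ha : a ∈ P) (hb : b ∈ P) : (a.1, b.2) ∈ P ∨ (b.1, a.2) ∈ P := by
  obtain ⟨-, -, hpath⟩ := hP
  obtain ⟨k, c, hc0, hck, hmem, hadj, hinj, hcard⟩ := hpath a ha b hb
  have hT : ∃ t, t ≤ k ∧ ∀ i, 0 < i → i < k →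
      ((c (i - 1)).1 ≠ (c (i + 1)).1 ∧ (c (i - 1)).2 ≠ (c (i + 1)).2) → i = t := by
    rcases Finset.eq_empty_or_nonempty ((Finset.Ioo 0 k).filter (fun i =>
        (c (i - 1)).1 ≠ (c (i + 1)).1 ∧ (c (i - 1)).2 ≠ (c (i + 1)).2)) with hS | ⟨t, ht⟩
    · refine ⟨0, Nat.zero_le k, fun i h1 h2 hturn => ?_⟩
      have hi : i ∈ (Finset.Ioo 0 k).filter (fun i =>
          (c (i - 1)).1 ≠ (c (i + 1)).1 ∧ (c (i - 1)).2 ≠ (c (i + 1)).2) :=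
        Finset.mem_filter.mpr ⟨Finset.mem_Ioo.mpr ⟨h1, h2⟩, hturn⟩
      rw [hS] at hi
      exact absurd hi (Finset.notMem_empty i)
    · have htk : t ≤ k := by
        have := (Finset.mem_Ioo.mp (Finset.mem_filter.mp ht).1).2; omega
      refine ⟨t, htk, fun i h1 h2 hturn => ?_⟩
      exact Finset.card_le_one.mp hcard i
        (Finset.mem_filter.mpr ⟨Finset.mem_Ioo.mpr ⟨h1, h2⟩, hturn⟩) t ht
  obtain ⟨t, htk, huniq⟩ := hT
  have s1 := segLemma k c hadj hinj 0 t (Nat.zero_le t) htk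
    (fun i hi1 hi2 hturn => by have := huniq i hi1 (by omega) hturn; omega)
  have s2 := segLemma k c hadj hinj t k htk le_rfl
    (fun i hi1 hi2 hturn => by have := huniq i (by omega) hi2 hturn; omega)
  have hct : c t ∈ P := hmem t htk
  have h01 : (c 0).1 = a.1 := by rw [hc0]
  have h02 : (c 0).2 = a.2 := by rw [hc0]
  have hk1 : (c k).1 = b.1 := by rw [hck]
  have hk2 : (c k).2 = b.2 := by rw [hck]
  rcases s1 with e1 | e1 <;> rcases s2 with e2 | e2
  · right
    have hba : ((b.1, a.2) : ℤ × ℤ) = a := by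
      rw [Prod.ext_iff]; exact ⟨by omega, rfl⟩
    rw [hba]; exact ha
  · left
    have : ((a.1, b.2) : ℤ × ℤ) = c t := by
      rw [Prod.ext_iff]; exact ⟨by omega, by omega⟩
    rw [this]; exact hct
  · right
    have : ((b.1, a.2) : ℤ × ℤ) = c t := by
      rw [Prod.ext_iff]; exact ⟨by omega, by omega⟩
    rw [this]; exact hct
  · left
    have hab : ((a.1, b.2) : ℤ × ℤ) = a := by
      rw [Prod.ext_iff]; exact ⟨rfl, by omega⟩
    rw [hab]; exact ha

/-- In an L-convex polyomino, a maximal rectangle has a unique occurrence: two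
maximal rectangular subpolyominoes of the same width and height coincide. -/
theorem stmt5 (P : Finset (ℤ × ℤ)) (hP : IsLConvex P)
    (x y x' y' : ℤ) (w h : ℕ) (hw : 0 < w) (hh : 0 < h)
    (h1 : MaximalRect P (rectCells x y w h))
    (h2 : MaximalRect P (rectCells x' y' w h)) :
    x = x' ∧ y = y' := by
  have hrow := hP.1
  have hcol := hP.2.1
  obtain ⟨-, hR1, hmax1⟩ := h1
  obtain ⟨-, hR2, hmax2⟩ := h2
  have memR1 : ∀ i j : ℤ, x ≤ i → i < x + w → y ≤ j → j < y + h → (i, j) ∈ P :=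
    fun i j a b c d => hR1 (mem_rect.mpr ⟨a, b, c, d⟩)
  have memR2 : ∀ i j : ℤ, x' ≤ i → i < x' + w → y' ≤ j → j < y' + h → (i, j) ∈ P :=
    fun i j a b c d => hR2 (mem_rect.mpr ⟨a, b, c, d⟩)
  have hmix : (∀ i j : ℤ, x ≤ i → i < x + w → y' ≤ j → j < y' + h → (i, j) ∈ P) ∨
      (∀ i j : ℤ, x' ≤ i → i < x' + w → y ≤ j → j < y + h → (i, j) ∈ P) := by
    by_contra hc
    push_neg at hc
    obtain ⟨⟨i, j, hi1, hi2, hj1, hj2, hij⟩, ⟨i', j', hi'1, hi'2, hj'1, hj'2, hij'⟩⟩ := hc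
    rcases cross hP (memR1 i j' hi1 hi2 hj'1 hj'2) (memR2 i' j hi'1 hi'2 hj1 hj2) with hp | hp
    · exact hij hp
    · exact hij' hp
  have hy : y = y' := by
    rcases hmix with hm | hm
    · have hsub : rectCells x (min y y') w (h + (y' - y).natAbs) ⊆ P := by
        rintro ⟨i, j⟩ hq
        rw [mem_rect] at hq
        have e1 : (i, min y y') ∈ P := by
          rcases le_total y y' with hle | hle
          · exact memR1 i _ (by omega) (by omega) (by omega) (by omega)
          · exact hm i _ (by omega) (by omega) (by omega) (by omega)
        have e2 : (i, max y y' + (h : ℤ) - 1) ∈ P := by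
          rcases le_total y y' with hle | hle
          · exact hm i _ (by omega) (by omega) (by omega) (by omega)
          · exact memR1 i _ (by omega) (by omega) (by omega) (by omega)
        exact hrow i (min y y') j (max y y' + (h : ℤ) - 1) e1 e2 (by omega) (by omega)
      have heq := hmax1 _ ⟨x, min y y', w, h + (y' - y).natAbs, hw, by omega, rfl⟩ hsub
        (by intro q hq; rw [mem_rect] at *; omega)
      have m1 : ((x, min y y') : ℤ × ℤ) ∈ rectCells x y w h := by
        rw [heq]; exact mem_rect.mpr ⟨by omega, by omega, by omega, by omega⟩
      have m2 : ((x, y' + (h : ℤ) - 1) : ℤ × ℤ) ∈ rectCells x y w h := by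
        rw [heq]; exact mem_rect.mpr ⟨by omega, by omega, by omega, by omega⟩
      rw [mem_rect] at m1 m2
      simp only at m1 m2
      omega
    · have hsub : rectCells x' (min y y') w (h + (y - y').natAbs) ⊆ P := by
        rintro ⟨i, j⟩ hq
        rw [mem_rect] at hq
        have e1 : (i, min y y') ∈ P := by
          rcases le_total y y' with hle | hle
          · exact hm i _ (by omega) (by omega) (by omega) (by omega)
          · exact memR2 i _ (by omega) (by omega) (by omega) (by omega)
        have e2 : (i, max y y' + (h : ℤ) - 1) ∈ P := by
          rcases le_total y y' with hle | hle
          · exact memR2 i _ (by omega) (by omega) (by omega) (by omega)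
          · exact hm i _ (by omega) (by omega) (by omega) (by omega)
        exact hrow i (min y y') j (max y y' + (h : ℤ) - 1) e1 e2 (by omega) (by omega)
      have heq := hmax2 _ ⟨x', min y y', w, h + (y - y').natAbs, hw, by omega, rfl⟩ hsub
        (by intro q hq; rw [mem_rect] at *; omega)
      have m1 : ((x', min y y') : ℤ × ℤ) ∈ rectCells x' y' w h := by
        rw [heq]; exact mem_rect.mpr ⟨by omega, by omega, by omega, by omega⟩
      have m2 : ((x', y + (h : ℤ) - 1) : ℤ × ℤ) ∈ rectCells x' y' w h := by
        rw [heq]; exact mem_rect.mpr ⟨by omega, by omega, by omega, by omega⟩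
      rw [mem_rect] at m1 m2
      simp only at m1 m2
      omega
  subst hy
  have hsub2 : rectCells (min x x') y (w + (x' - x).natAbs) h ⊆ P := by
    rintro ⟨i, j⟩ hq
    rw [mem_rect] at hq
    have e1 : (min x x', j) ∈ P := by
      rcases le_total x x' with hle | hle
      · exact memR1 _ j (by omega) (by omega) (by omega) (by omega)
      · exact memR2 _ j (by omega) (by omega) (by omega) (by omega)
    have e2 : (max x x' + (w : ℤ) - 1, j) ∈ P := by
      rcases le_total x x' with hle | hle
      · exact memR2 _ j (by omega) (by omega) (by omega) (by omega)
      · exact memR1 _ j (by omega) (by omega) (by omega) (by omega)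
    exact hcol (min x x') i (max x x' + (w : ℤ) - 1) j e1 e2 (by omega) (by omega)
  have heq := hmax1 _ ⟨min x x', y, w + (x' - x).natAbs, h, by omega, hh, rfl⟩ hsub2
    (by intro q hq; rw [mem_rect] at *; omega)
  have m1 : ((min x x', y) : ℤ × ℤ) ∈ rectCells x y w h := by
    rw [heq]; exact mem_rect.mpr ⟨by omega, by omega, by omega, by omega⟩
  have m2 : ((x' + (w : ℤ) - 1, y) : ℤ × ℤ) ∈ rectCells x y w h := by
    rw [heq]; exact mem_rect.mpr ⟨by omega, by omega, by omega, by omega⟩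
  rw [mem_rect] at m1 m2
  simp only at m1 m2
  exact ⟨by omega, rfl⟩
end

section
/- Let P be an L-convex polyomino. Then there exists a Ferrer diagram P* (a polyomino whose rows are left-justified with weakly decreasing lengths) such that the row-column bipartite graph F_P of P is isomorphic to F_{P*}; namely, P* is the Ferrer diagram whose row lengths are the entries of H_P sorted in weakly decreasing order and whose column lengths are the entries of V_P sorted in weakly decreasing order. -/
/-- The multiset of row lengths of `P` (one entry per occupied row). -/
def rowMultiset (P : Finset (ℤ × ℤ)) : Multiset ℕ :=
  (P.image Prod.fst).val.map (rowCount P)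

/-- The multiset of column lengths of `P` (one entry per occupied column). -/
def colMultiset (P : Finset (ℤ × ℤ)) : Multiset ℕ :=
  (P.image Prod.snd).val.map (colCount P)

/-- The Ferrer diagram (as a set of cells in `ℤ × ℤ`) with `n` left-justified
rows, row `i` (0-based) having `h i` cells. -/
def ferrerCellsZ (n : ℕ) (h : ℕ → ℕ) : Finset (ℤ × ℤ) :=
  (Finset.range n).biUnion
    (fun i => (Finset.range (h i)).image (fun (j : ℕ) => ((i : ℤ), (j : ℤ))))

/-!
An L-path from `(i, j)` to `(i', j')` turns at most once, so its corner `(i, j')` or `(i', j)`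
lies in `P`. Hence the columns of `P` are nested: a column at least as long as another contains
all its cells. Ranking the columns by decreasing length, every row of `P` becomes the initial
segment of the ranks whose length is its row length, so relabelling rows and columns by their
ranks carries `P` onto the Ferrer diagram of its sorted row lengths; such a relabelling preserves
all row and column lengths.
-/

open Finset

def SameLine (a b : ℤ × ℤ) : Prop := a.1 = b.1 ∨ a.2 = b.2

theorem straight_of_noTurn {c : ℕ → ℤ × ℤ} {lo hi : ℕ} (hle : lo ≤ hi)
    (hadj : ∀ t, lo ≤ t → t < hi → CellAdj (c t) (c (t + 1)))
    (hturn : ∀ t, lo < t → t < hi → SameLine (c (t - 1)) (c (t + 1))) :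
    (∀ s, lo ≤ s → s ≤ hi → (c s).1 = (c lo).1) ∨ (∀ s, lo ≤ s → s ≤ hi → (c s).2 = (c lo).2) := by
  induction hi, hle using Nat.le_induction with
  | base => left; intro s h1 h2; rw [le_antisymm h2 h1]
  | succ hi hlo ih =>
    have ih := ih (fun t h1 h2 => hadj t h1 (by omega)) (fun t h1 h2 => hturn t h1 (by omega))
    have hlast := hadj hi hlo (by omega)
    unfold CellAdj at hlast
    rcases hlo.eq_or_lt with rfl | hlt
    · have hs (s : ℕ) (h1 : lo ≤ s) (h2 : s ≤ lo + 1) : s = lo ∨ s = lo + 1 := by omega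
      rcases hlast with ⟨hrow, -⟩ | ⟨hcol, -⟩
      · left; intro s h1 h2; rcases hs s h1 h2 with rfl | rfl <;> simp [hrow]
      · right; intro s h1 h2; rcases hs s h1 h2 with rfl | rfl <;> simp [hcol]
    · have hprev := hadj (hi - 1) (by omega) (by omega)
      rw [Nat.sub_add_cancel (by omega)] at hprev
      have hbend := hturn hi hlt (by omega)
      unfold CellAdj at hprev
      unfold SameLine at hbend
      refine ih.imp (fun h s h1 h2 => ?_) (fun h s h1 h2 => ?_) <;>
      · rcases (show s ≤ hi ∨ s = hi + 1 by omega) with hs | rfl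
        · exact h s h1 hs
        · have := h hi (by omega) le_rfl
          have := h (hi - 1) (by omega) (by omega)
          omega

theorem corner_mem_of_sameLine {P : Finset (ℤ × ℤ)} {a b x : ℤ × ℤ} (hx : x ∈ P)
    (ha : a ∈ P) (hb : b ∈ P) (hax : SameLine a x) (hxb : SameLine x b) :
    (a.1, b.2) ∈ P ∨ (b.1, a.2) ∈ P := by
  obtain ⟨i, j⟩ := a
  obtain ⟨i', j'⟩ := b
  obtain ⟨p, q⟩ := x
  unfold SameLine at hax hxb
  simp only at hax hxb ⊢
  rcases hax with rfl | rfl <;> rcases hxb with rfl | rfl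
  exacts [Or.inl hb, Or.inl hx, Or.inr hx, Or.inl ha]

theorem IsLConvex.corner_mem {P : Finset (ℤ × ℤ)} (hP : IsLConvex P) {i j i' j' : ℤ}
    (h : (i, j) ∈ P) (h' : (i', j') ∈ P) : (i, j') ∈ P ∨ (i', j) ∈ P := by
  obtain ⟨k, c, hc0, hck, hmem, hadj, -, hturns⟩ := hP.2.2 _ h _ h'
  obtain ⟨t, htk, hstraight⟩ : ∃ t ≤ k, ∀ s, 0 < s → s < k → s ≠ t →
      SameLine (c (s - 1)) (c (s + 1)) := by
    by_cases hT : ∃ t, 0 < t ∧ t < k ∧ ¬ SameLine (c (t - 1)) (c (t + 1))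
    · obtain ⟨t, ht0, htk, ht⟩ := hT
      refine ⟨t, htk.le, fun s hs0 hsk hst => by_contra fun hs => hst ?_⟩
      refine card_le_one.mp hturns s ?_ t ?_ <;>
        simp only [mem_filter, mem_Ioo] <;> unfold SameLine at * <;> tauto
    · push Not at hT
      exact ⟨0, k.zero_le, fun s hs0 hsk _ => hT s hs0 hsk⟩
  have hline (lo hi : ℕ) (hle : lo ≤ hi) (hhi : hi ≤ k)
      (hturn : ∀ s, lo < s → s < hi → s ≠ t) : SameLine (c lo) (c hi) := by
    rcases straight_of_noTurn hle (fun s _ hs => hadj s (by omega))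
      (fun s h1 h2 => hstraight s (by omega) (by omega) (hturn s h1 h2)) with h | h
    · exact Or.inl (h hi hle le_rfl).symm
    · exact Or.inr (h hi hle le_rfl).symm
  have h0t := hline 0 t t.zero_le htk (fun s _ hs => hs.ne)
  have htk' := hline t k htk le_rfl (fun s hs _ => hs.ne')
  rw [hc0] at h0t
  rw [hck] at htk'
  exact corner_mem_of_sameLine (hmem t htk) h h' h0t htk'

section KeyRank

variable {ι α : Type*} [LinearOrder α] (k : ι → α) (s : Finset ι)

def keyRank (x : ι) : ℕ := #{y ∈ s | k y < k x}

variable {k s}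

theorem keyRank_le_keyRank {x y : ι} (h : k x ≤ k y) : keyRank k s x ≤ keyRank k s y :=
  card_le_card fun z hz => by
    simp only [mem_filter] at hz ⊢
    exact ⟨hz.1, hz.2.trans_le h⟩

theorem keyRank_lt_keyRank {x y : ι} (hx : x ∈ s) (h : k x < k y) :
    keyRank k s x < keyRank k s y := by
  refine card_lt_card ((ssubset_iff_of_subset fun z hz => ?_).mpr ⟨x, ?_, ?_⟩)
  · simp only [mem_filter] at hz ⊢
    exact ⟨hz.1, hz.2.trans h⟩
  · simp [hx, h]
  · simp

theorem lt_of_keyRank_lt {x y : ι} (h : keyRank k s x < keyRank k s y) : k x < k y :=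
  lt_of_not_ge fun hyx => (keyRank_le_keyRank hyx).not_gt h

theorem keyRank_injOn (hk : Function.Injective k) : Set.InjOn (keyRank k s) s := by
  intro x hx y hy hxy
  rcases lt_trichotomy (k x) (k y) with h | h | h
  · exact absurd hxy (keyRank_lt_keyRank hx h).ne
  · exact hk h
  · exact absurd hxy (keyRank_lt_keyRank hy h).ne'

theorem mem_iff_keyRank_lt_card [DecidableEq ι] {D : Finset ι} (hDs : D ⊆ s)
    (hD : ∀ x ∈ D, ∀ y ∈ s, k y ≤ k x → y ∈ D) {x : ι} (hx : x ∈ s) :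
    x ∈ D ↔ keyRank k s x < #D := by
  constructor
  · intro hxD
    calc keyRank k s x ≤ #(D.erase x) := card_le_card fun y hy => by
          simp only [mem_filter] at hy
          exact mem_erase.mpr ⟨fun h => by simp [h] at hy, hD x hxD y hy.1 hy.2.le⟩
      _ < #D := card_erase_lt_of_mem hxD
  · intro hlt
    by_contra hxD
    refine hlt.not_ge (card_le_card fun y hy => ?_)
    have hky : k y < k x := lt_of_not_ge fun hxy => hxD (hD y hy x hx hxy)
    exact mem_filter.mpr ⟨hDs hy, hky⟩

theorem keyRank_lt_card {x : ι} (hx : x ∈ s) : keyRank k s x < #s :=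
  card_lt_card ((ssubset_iff_of_subset (filter_subset _ _)).mpr
    ⟨x, hx, by simp⟩)

theorem exists_keyRank_eq (hk : Function.Injective k) {r : ℕ} (hr : r < #s) :
    ∃ x ∈ s, keyRank k s x = r := by
  have himage : s.image (keyRank k s) = range #s :=
    eq_of_subset_of_card_le
      (fun r hr => by
        obtain ⟨x, hx, rfl⟩ := mem_image.mp hr
        exact mem_range.mpr (keyRank_lt_card hx))
      (by rw [card_range, card_image_of_injOn (keyRank_injOn hk)])
  simpa using himage.ge (mem_range.mpr hr)

end KeyRank

def colsInRow (P : Finset (ℤ × ℤ)) (i : ℤ) : Finset ℤ := {c ∈ P | c.1 = i}.image Prod.snd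

def rowsInCol (P : Finset (ℤ × ℤ)) (j : ℤ) : Finset ℤ := {c ∈ P | c.2 = j}.image Prod.fst

section Lines

variable {P : Finset (ℤ × ℤ)}

@[simp]
theorem mem_colsInRow {i j : ℤ} : j ∈ colsInRow P i ↔ (i, j) ∈ P := by
  simp [colsInRow]

@[simp]
theorem mem_rowsInCol {i j : ℤ} : i ∈ rowsInCol P j ↔ (i, j) ∈ P := by
  simp [rowsInCol]

theorem card_colsInRow (i : ℤ) : #(colsInRow P i) = rowCount P i :=
  card_image_of_injOn fun x hx y hy hxy => by
    simp only [mem_coe, mem_filter] at hx hy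
    exact Prod.ext (hx.2.trans hy.2.symm) hxy

theorem card_rowsInCol (j : ℤ) : #(rowsInCol P j) = colCount P j :=
  card_image_of_injOn fun x hx y hy hxy => by
    simp only [mem_coe, mem_filter] at hx hy
    exact Prod.ext hxy (hx.2.trans hy.2.symm)

end Lines

def IsCornerClosed (P : Finset (ℤ × ℤ)) : Prop :=
  ∀ ⦃i j i' j' : ℤ⦄, (i, j) ∈ P → (i', j') ∈ P → (i, j') ∈ P ∨ (i', j) ∈ P

theorem IsLConvex.isCornerClosed {P : Finset (ℤ × ℤ)} (hP : IsLConvex P) : IsCornerClosed P :=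
  fun _ _ _ _ => hP.corner_mem

theorem IsCornerClosed.mem_of_colCount_le {P : Finset (ℤ × ℤ)} (hP : IsCornerClosed P)
    {i j j' : ℤ} (hij : (i, j) ∈ P) (hle : colCount P j ≤ colCount P j') : (i, j') ∈ P := by
  by_contra hij'
  have hsub : rowsInCol P j' ⊆ rowsInCol P j := fun i' hi' => by
    simpa [hij'] using hP hij (mem_rowsInCol.mp hi')
  have hlt := card_lt_card ((ssubset_iff_of_subset hsub).mpr
    ⟨i, mem_rowsInCol.mpr hij, fun h => hij' (mem_rowsInCol.mp h)⟩)
  rw [card_rowsInCol, card_rowsInCol] at hlt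
  exact hlt.not_ge hle

/-- Orders indices by decreasing weight `w`, ties broken by the index itself. -/
def countKey (w : ℤ → ℕ) (i : ℤ) : ℤ ×ₗ ℤ := toLex (-(w i : ℤ), i)

theorem countKey_injective (w : ℤ → ℕ) : Function.Injective (countKey w) :=
  fun _ _ h => congrArg Prod.snd (toLex.injective h)

theorem le_of_countKey_le {w : ℤ → ℕ} {x y : ℤ} (h : countKey w x ≤ countKey w y) : w y ≤ w x := by
  rw [countKey, countKey, Prod.Lex.toLex_le_toLex] at h
  omega

def rowRank (P : Finset (ℤ × ℤ)) : ℤ → ℕ := keyRank (countKey (rowCount P)) (P.image Prod.fst)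

def colRank (P : Finset (ℤ × ℤ)) : ℤ → ℕ := keyRank (countKey (colCount P)) (P.image Prod.snd)

theorem IsCornerClosed.mem_iff_colRank_lt {P : Finset (ℤ × ℤ)} (hP : IsCornerClosed P) (i j : ℤ) :
    (i, j) ∈ P ↔ j ∈ P.image Prod.snd ∧ colRank P j < rowCount P i := by
  by_cases hj : j ∈ P.image Prod.snd
  · have hdown : ∀ x ∈ colsInRow P i, ∀ y ∈ P.image Prod.snd,
        countKey (colCount P) y ≤ countKey (colCount P) x → y ∈ colsInRow P i := by
      intro x hx y _ hyx
      exact mem_colsInRow.mpr (hP.mem_of_colCount_le (mem_colsInRow.mp hx) (le_of_countKey_le hyx))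
    have hsub : colsInRow P i ⊆ P.image Prod.snd := fun x hx =>
      mem_image_of_mem Prod.snd (mem_colsInRow.mp hx)
    rw [← mem_colsInRow, mem_iff_keyRank_lt_card hsub hdown hj, card_colsInRow]
    exact (and_iff_right hj).symm
  · exact iff_of_false (fun h => hj (mem_image_of_mem Prod.snd h)) (fun h => hj h.1)

/-- The row lengths of `P` in decreasing order; junk beyond the number of rows of `P`. -/
noncomputable def sortedRowLengths (P : Finset (ℤ × ℤ)) (r : ℕ) : ℕ :=
  rowCount P (Function.invFunOn (rowRank P) (P.image Prod.fst) r)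

section SortedRowLengths

variable {P : Finset (ℤ × ℤ)}

theorem rowRank_injOn : Set.InjOn (rowRank P) (P.image Prod.fst) :=
  keyRank_injOn (countKey_injective _)

theorem colRank_injOn : Set.InjOn (colRank P) (P.image Prod.snd) :=
  keyRank_injOn (countKey_injective _)

theorem sortedRowLengths_rowRank {i : ℤ} (hi : i ∈ P.image Prod.fst) :
    sortedRowLengths P (rowRank P i) = rowCount P i := by
  rw [sortedRowLengths, rowRank_injOn.leftInvOn_invFunOn hi]

theorem exists_rowRank_eq {r : ℕ} (hr : r < #(P.image Prod.fst)) :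
    ∃ i ∈ P.image Prod.fst, rowRank P i = r :=
  exists_keyRank_eq (countKey_injective _) hr

theorem sortedRowLengths_antitone {r r' : ℕ} (hrr' : r ≤ r') (hr' : r' < #(P.image Prod.fst)) :
    sortedRowLengths P r' ≤ sortedRowLengths P r := by
  obtain ⟨i, hi, rfl⟩ := exists_rowRank_eq (hrr'.trans_lt hr')
  obtain ⟨i', hi', rfl⟩ := exists_rowRank_eq hr'
  rw [sortedRowLengths_rowRank hi, sortedRowLengths_rowRank hi']
  rcases hrr'.eq_or_lt with h | h
  · rw [rowRank_injOn hi hi' h]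
  · exact le_of_countKey_le (lt_of_keyRank_lt h).le

theorem sortedRowLengths_pos {r : ℕ} (hr : r < #(P.image Prod.fst)) : 0 < sortedRowLengths P r := by
  obtain ⟨i, hi, rfl⟩ := exists_rowRank_eq hr
  obtain ⟨c, hc, rfl⟩ := mem_image.mp hi
  rw [sortedRowLengths_rowRank hi]
  exact card_pos.mpr ⟨c, mem_filter.mpr ⟨hc, rfl⟩⟩

theorem sortedRowLengths_le_card {r : ℕ} (hr : r < #(P.image Prod.fst)) :
    sortedRowLengths P r ≤ #(P.image Prod.snd) := by
  obtain ⟨i, hi, rfl⟩ := exists_rowRank_eq hr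
  rw [sortedRowLengths_rowRank hi, ← card_colsInRow]
  exact card_le_card fun j hj => mem_image_of_mem Prod.snd (mem_colsInRow.mp hj)

end SortedRowLengths

/-- Indices outside `s` go to distinct negative values, hence outside every Ferrer diagram. -/
def extendNeg {ι : Type*} [Encodable ι] [DecidableEq ι] (s : Finset ι) (g : ι → ℕ) (x : ι) : ℤ :=
  if x ∈ s then g x else -1 - Encodable.encode x

section ExtendNeg

variable {ι : Type*} [Encodable ι] [DecidableEq ι] {s : Finset ι} {g : ι → ℕ}

theorem extendNeg_of_mem {x : ι} (hx : x ∈ s) : extendNeg s g x = g x := if_pos hx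

theorem extendNeg_nonneg_iff {x : ι} : 0 ≤ extendNeg s g x ↔ x ∈ s := by
  unfold extendNeg
  split_ifs with hx
  · simp [hx]
  · simp only [hx, iff_false, not_le]
    omega

theorem extendNeg_injective (hg : Set.InjOn g s) : Function.Injective (extendNeg s g) := by
  intro x y hxy
  unfold extendNeg at hxy
  split_ifs at hxy with hx hy hy
  · exact hg hx hy (by exact_mod_cast hxy)
  · omega
  · omega
  · exact Encodable.encode_injective (by omega)

end ExtendNeg

theorem mem_ferrerCellsZ {n : ℕ} {h : ℕ → ℕ} {x y : ℤ} :
    (x, y) ∈ ferrerCellsZ n h ↔ ∃ r < n, ∃ c < h r, (r : ℤ) = x ∧ (c : ℤ) = y := by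
  simp [ferrerCellsZ]

theorem IsCornerClosed.mem_iff_mem_ferrerCellsZ {P : Finset (ℤ × ℤ)} (hP : IsCornerClosed P)
    (i j : ℤ) :
    (i, j) ∈ P ↔ (extendNeg (P.image Prod.fst) (rowRank P) i,
      extendNeg (P.image Prod.snd) (colRank P) j) ∈
        ferrerCellsZ #(P.image Prod.fst) (sortedRowLengths P) := by
  rw [mem_ferrerCellsZ]
  constructor
  · intro hij
    have hi := mem_image_of_mem Prod.fst hij
    obtain ⟨hj, hlt⟩ := (hP.mem_iff_colRank_lt i j).mp hij
    refine ⟨rowRank P i, keyRank_lt_card hi, colRank P j, ?_, (extendNeg_of_mem hi).symm,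
      (extendNeg_of_mem hj).symm⟩
    rwa [sortedRowLengths_rowRank hi]
  · rintro ⟨r, -, c, hc, hr, hcj⟩
    have hi := extendNeg_nonneg_iff.mp (hr ▸ Int.natCast_nonneg r)
    have hj := extendNeg_nonneg_iff.mp (hcj ▸ Int.natCast_nonneg c)
    rw [extendNeg_of_mem hi, Nat.cast_inj] at hr
    rw [extendNeg_of_mem hj, Nat.cast_inj] at hcj
    rw [hr, sortedRowLengths_rowRank hi, hcj] at hc
    exact (hP.mem_iff_colRank_lt i j).mpr ⟨hj, hc⟩

theorem eq_image_prodMap_of_mem_iff {α β γ δ : Type*} [DecidableEq γ] [DecidableEq δ]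
    {P : Finset (α × β)} {Q : Finset (γ × δ)} {f : α → γ} {g : β → δ}
    (hPQ : ∀ i j, (i, j) ∈ P ↔ (f i, g j) ∈ Q)
    (hQ : ∀ c ∈ Q, c.1 ∈ Set.range f ∧ c.2 ∈ Set.range g) :
    Q = P.image (Prod.map f g) := by
  ext ⟨x, y⟩
  refine ⟨fun hxy => ?_, fun hxy => ?_⟩
  · obtain ⟨⟨i, rfl⟩, ⟨j, rfl⟩⟩ := hQ _ hxy
    exact mem_image_of_mem _ ((hPQ i j).mpr hxy)
  · obtain ⟨⟨i, j⟩, hij, hc⟩ := mem_image.mp hxy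
    rw [← hc]
    exact (hPQ i j).mp hij

section Relabel

variable {P : Finset (ℤ × ℤ)} {f g : ℤ → ℤ}

theorem rowCount_image_prodMap (hf : Function.Injective f) (hg : Function.Injective g) (i : ℤ) :
    rowCount (P.image (Prod.map f g)) (f i) = rowCount P i := by
  rw [rowCount, filter_image, card_image_of_injective _ (hf.prodMap hg)]
  simp only [Prod.map_fst, hf.eq_iff]
  rfl

theorem rowMultiset_image_prodMap (hf : Function.Injective f) (hg : Function.Injective g) :
    rowMultiset (P.image (Prod.map f g)) = rowMultiset P := by
  rw [rowMultiset, image_image, Prod.map_fst', ← image_image,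
    image_val_of_injOn hf.injOn, Multiset.map_map]
  exact Multiset.map_congr rfl fun i _ => rowCount_image_prodMap hf hg i

theorem colMultiset_eq_rowMultiset_swap (P : Finset (ℤ × ℤ)) :
    colMultiset P = rowMultiset (P.image Prod.swap) := by
  rw [colMultiset, rowMultiset, image_image]
  refine Multiset.map_congr rfl fun j _ => ?_
  rw [rowCount, filter_image, card_image_of_injective _ Prod.swap_injective]
  rfl

theorem colMultiset_image_prodMap (hf : Function.Injective f) (hg : Function.Injective g) :
    colMultiset (P.image (Prod.map f g)) = colMultiset P := by
  rw [colMultiset_eq_rowMultiset_swap, colMultiset_eq_rowMultiset_swap, image_image,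
    ← Prod.map_comp_swap, ← image_image, rowMultiset_image_prodMap hg hf]

end Relabel

theorem IsCornerClosed.ferrerCellsZ_eq_image {P : Finset (ℤ × ℤ)} (hP : IsCornerClosed P) :
    ferrerCellsZ #(P.image Prod.fst) (sortedRowLengths P) =
      P.image (Prod.map (extendNeg (P.image Prod.fst) (rowRank P))
        (extendNeg (P.image Prod.snd) (colRank P))) := by
  refine eq_image_prodMap_of_mem_iff hP.mem_iff_mem_ferrerCellsZ fun ⟨x, y⟩ hxy => ?_
  obtain ⟨r, hr, c, hc, rfl, rfl⟩ := mem_ferrerCellsZ.mp hxy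
  obtain ⟨i, hi, rfl⟩ := exists_rowRank_eq hr
  obtain ⟨j, hj, rfl⟩ := exists_keyRank_eq (countKey_injective (colCount P))
    (hc.trans_le (sortedRowLengths_le_card hr))
  exact ⟨⟨i, extendNeg_of_mem hi⟩, ⟨j, extendNeg_of_mem hj⟩⟩

theorem stmt9_general (P : Finset (ℤ × ℤ)) (hP : IsLConvex P) :
    ∃ (n : ℕ) (h : ℕ → ℕ),
      (∀ i j : ℕ, i ≤ j → j < n → h j ≤ h i) ∧ (∀ i, i < n → 0 < h i) ∧
      rowMultiset (ferrerCellsZ n h) = rowMultiset P ∧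
      colMultiset (ferrerCellsZ n h) = colMultiset P ∧
      ∃ (f g : ℤ → ℤ), Function.Injective f ∧ Function.Injective g ∧
        ∀ i j : ℤ, (i, j) ∈ P ↔ (f i, g j) ∈ ferrerCellsZ n h := by
  have hcorner := hP.isCornerClosed
  have hf := extendNeg_injective (rowRank_injOn (P := P))
  have hg := extendNeg_injective (colRank_injOn (P := P))
  refine ⟨_, sortedRowLengths P, fun _ _ => sortedRowLengths_antitone,
    fun _ => sortedRowLengths_pos, ?_, ?_, _, _, hf, hg, hcorner.mem_iff_mem_ferrerCellsZ⟩
  · rw [hcorner.ferrerCellsZ_eq_image, rowMultiset_image_prodMap hf hg]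
  · rw [hcorner.ferrerCellsZ_eq_image, colMultiset_image_prodMap hf hg]

/-- For every L-convex polyomino `P` there is a Ferrer diagram `P*` — with weakly
decreasing positive row lengths given by the row lengths of `P` sorted decreasingly,
and column lengths those of `P` sorted decreasingly — such that the row-column
bipartite graphs `F_P` and `F_{P*}` are isomorphic: there are injections of rows
and columns carrying the cells of `P` exactly onto the cells of `P*`. -/
theorem stmt9 (P : Finset (ℤ × ℤ)) (hne : P.Nonempty) (hP : IsLConvex P) :
    ∃ (n : ℕ) (h : ℕ → ℕ),
      (∀ i j : ℕ, i ≤ j → j < n → h j ≤ h i) ∧ (∀ i, i < n → 0 < h i) ∧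
      rowMultiset (ferrerCellsZ n h) = rowMultiset P ∧
      colMultiset (ferrerCellsZ n h) = colMultiset P ∧
      ∃ (f g : ℤ → ℤ), Function.Injective f ∧ Function.Injective g ∧
        ∀ i j : ℤ, (i, j) ∈ P ↔ (f i, g j) ∈ ferrerCellsZ n h :=
  stmt9_general P hP
end

section
/- Let P be an L-convex polyomino, P* its projected Ferrer diagram, and let P = P_0, P_1, ..., P_t be the derived sequence obtained by repeatedly deleting the maximal rectangle of full width. Then the derived sequence of P* has the same length t, and for each k, the k-th term (P*)_k of the derived sequence of P* equals the Ferrer diagram projected by P_k. -/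
/-- `Q` is obtained from `P` by deleting the (unique) maximal rectangle of full
width: rows `s, …, s+d-1` of `P` are exactly the full-width rows (containing a cell
in every occupied column of `P`), all other rows are strictly shorter, and `Q`
consists of the rows below row `s` together with the rows from `s+d` on, shifted
down by `d` to close the gap. -/
def DerivedStep (P Q : Finset (ℤ × ℤ)) : Prop :=
  ∃ (s : ℤ) (d : ℕ), 0 < d ∧
    (∀ i : ℤ, s ≤ i → i < s + d → rowCount P i = (P.image Prod.snd).card) ∧
    (∀ i : ℤ, i < s ∨ s + d ≤ i → rowCount P i < (P.image Prod.snd).card) ∧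
    Q = (P.filter (fun c => c.1 < s)) ∪
        ((P.filter (fun c => s + d ≤ c.1)).image (fun c => (c.1 - d, c.2)))

/-- `Q` is the Ferrer diagram projected by `P`: a Ferrer diagram whose multisets of
row lengths and of column lengths are those of `P`. -/
def IsProjectedFerrerOf (P Q : Finset (ℤ × ℤ)) : Prop :=
  (∃ (n : ℕ) (h : ℕ → ℕ), (∀ i j : ℕ, i ≤ j → j < n → h j ≤ h i) ∧
    (∀ i, i < n → 0 < h i) ∧ Q = ferrerCellsZ n h) ∧
  rowMultiset Q = rowMultiset P ∧ colMultiset Q = colMultiset P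

open Finset

lemma mem_rows_iff (P : Finset (ℤ × ℤ)) (i : ℤ) : i ∈ P.image Prod.fst ↔ rowCount P i ≠ 0 := by
  rw [rowCount, Ne, Finset.card_eq_zero, ← Finset.not_nonempty_iff_eq_empty, not_not,
    Finset.filter_nonempty_iff]
  simp [eq_comm]

lemma mem_cols_iff (P : Finset (ℤ × ℤ)) (j : ℤ) : j ∈ P.image Prod.snd ↔ colCount P j ≠ 0 := by
  rw [colCount, Ne, Finset.card_eq_zero, ← Finset.not_nonempty_iff_eq_empty, not_not,
    Finset.filter_nonempty_iff]
  simp [eq_comm]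

lemma rowCount_le (P : Finset (ℤ × ℤ)) (i : ℤ) : rowCount P i ≤ (P.image Prod.snd).card := by
  rw [rowCount]
  apply Finset.card_le_card_of_injOn Prod.snd
  · intro c hc
    simp only [Finset.mem_coe, Finset.mem_filter] at hc
    exact Finset.mem_coe.mpr (Finset.mem_image_of_mem _ hc.1)
  · intro a ha b hb hab
    simp only [Finset.mem_coe, Finset.mem_filter] at ha hb
    exact Prod.ext (ha.2.trans hb.2.symm) hab

lemma full_row_cells (P : Finset (ℤ × ℤ)) (i j : ℤ)
    (hfull : rowCount P i = (P.image Prod.snd).card) (hj : j ∈ P.image Prod.snd) :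
    (i, j) ∈ P := by
  have hinj : Set.InjOn Prod.snd ((P.filter (fun c => c.1 = i)) : Set (ℤ × ℤ)) := by
    intro a ha b hb hab
    simp only [Finset.coe_filter, Set.mem_setOf_eq] at ha hb
    exact Prod.ext (ha.2.trans hb.2.symm) hab
  have hsub : (P.filter (fun c => c.1 = i)).image Prod.snd ⊆ P.image Prod.snd :=
    Finset.image_subset_image (Finset.filter_subset _ _)
  have hcard : ((P.filter (fun c => c.1 = i)).image Prod.snd).card = (P.image Prod.snd).card := by
    rw [Finset.card_image_of_injOn hinj]; exact hfull
  have heq : (P.filter (fun c => c.1 = i)).image Prod.snd = P.image Prod.snd :=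
    Finset.eq_of_subset_of_card_le hsub (le_of_eq hcard.symm)
  rw [← heq] at hj
  obtain ⟨c, hc, rfl⟩ := Finset.mem_image.mp hj
  simp only [Finset.mem_filter] at hc
  rw [← hc.2]
  simpa using hc.1


lemma shift_inj (d : ℕ) : Function.Injective (fun c : ℤ × ℤ => (c.1 - (d:ℤ), c.2)) := by
  rintro ⟨a1, a2⟩ ⟨b1, b2⟩ hab
  simp only [Prod.mk.injEq] at hab ⊢
  omega

lemma derived_facts {P P' : Finset (ℤ × ℤ)} (h : DerivedStep P P') :
    rowMultiset P' = (rowMultiset P).filter (fun m => m ≠ Multiset.card (colMultiset P)) ∧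
    colMultiset P' =
      ((colMultiset P).filter
        (fun m => (rowMultiset P).count (Multiset.card (colMultiset P)) < m)).map
        (fun m => m - (rowMultiset P).count (Multiset.card (colMultiset P))) := by
  obtain ⟨s, d, hd0, hfull, hless, hQeq⟩ := h
  set w := (P.image Prod.snd).card with hwdef
  have hcardw : Multiset.card (colMultiset P) = w := by
    rw [colMultiset, Multiset.card_map]; rfl
  have hw : 0 < w := Nat.lt_of_le_of_lt (Nat.zero_le _) (hless (s - 1) (Or.inl (by omega)))
  -- row filter structure of P'
  have key : ∀ j : ℤ, P'.filter (fun c => c.1 = j) =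
      if j < s then P.filter (fun c => c.1 = j)
      else (P.filter (fun c => c.1 = j + d)).image (fun c => (c.1 - (d:ℤ), c.2)) := by
    intro j
    split_ifs with hj
    · ext x
      simp only [hQeq, Finset.mem_filter, Finset.mem_union, Finset.mem_image]
      constructor
      · rintro ⟨hx, hxj⟩
        rcases hx with ⟨hxP, _⟩ | ⟨c, ⟨hcP, hcs⟩, hce⟩
        · exact ⟨hxP, hxj⟩
        · exfalso
          have : x.1 = c.1 - d := by rw [← hce]
          omega
      · rintro ⟨hxP, hxj⟩
        exact ⟨Or.inl ⟨hxP, by omega⟩, hxj⟩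
    · ext x
      simp only [hQeq, Finset.mem_filter, Finset.mem_union, Finset.mem_image]
      constructor
      · rintro ⟨hx, hxj⟩
        rcases hx with ⟨hxP, hlt⟩ | ⟨c, ⟨hcP, hcs⟩, hce⟩
        · omega
        · have hx1 : x.1 = c.1 - d := by rw [← hce]
          exact ⟨c, ⟨hcP, by omega⟩, hce⟩
      · rintro ⟨c, ⟨hcP, hc1⟩, hce⟩
        have hx1 : x.1 = c.1 - d := by rw [← hce]
        exact ⟨Or.inr ⟨c, ⟨hcP, by omega⟩, hce⟩, by omega⟩
  have hrc : ∀ j : ℤ, rowCount P' j = if j < s then rowCount P j else rowCount P (j + d) := by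
    intro j
    rw [rowCount, key j]
    split_ifs
    · rfl
    · rw [Finset.card_image_of_injective _ (shift_inj d)]; rfl
  -- column filter structure of P'
  have key2 : ∀ j : ℤ, P'.filter (fun c => c.2 = j) =
      (P.filter (fun c => c.2 = j ∧ c.1 < s)) ∪
      ((P.filter (fun c => c.2 = j ∧ s + d ≤ c.1)).image (fun c => (c.1 - (d:ℤ), c.2))) := by
    intro j
    ext x
    simp only [hQeq, Finset.mem_filter, Finset.mem_union, Finset.mem_image]
    constructor
    · rintro ⟨hx, hxj⟩
      rcases hx with ⟨hxP, hlt⟩ | ⟨c, ⟨hcP, hcs⟩, hce⟩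
      · exact Or.inl ⟨hxP, hxj, hlt⟩
      · have : x.2 = c.2 := by rw [← hce]
        exact Or.inr ⟨c, ⟨hcP, by omega, hcs⟩, hce⟩
    · rintro (⟨hxP, hxj, hlt⟩ | ⟨c, ⟨hcP, hcj, hcs⟩, hce⟩)
      · exact ⟨Or.inl ⟨hxP, hlt⟩, hxj⟩
      · have : x.2 = c.2 := by rw [← hce]
        exact ⟨Or.inr ⟨c, ⟨hcP, hcs⟩, hce⟩, by omega⟩
  -- cells of full rows
  have hmid : ∀ j ∈ P.image Prod.snd,
      P.filter (fun c => c.2 = j ∧ s ≤ c.1 ∧ c.1 < s + d) =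
      (Finset.Ico s (s + (d:ℤ))).image (fun i => (i, j)) := by
    intro j hj
    ext x
    simp only [Finset.mem_filter, Finset.mem_image, Finset.mem_Ico]
    constructor
    · rintro ⟨hxP, hx2, h1, h2⟩
      exact ⟨x.1, ⟨h1, h2⟩, by rw [← hx2]⟩
    · rintro ⟨i, ⟨h1, h2⟩, rfl⟩
      exact ⟨full_row_cells P i j (hfull i h1 h2) hj, rfl, h1, h2⟩
  have hcc : ∀ j ∈ P.image Prod.snd, colCount P' j + d = colCount P j := by
    intro j hj
    have hdisj : Disjoint (P.filter (fun c => c.2 = j ∧ c.1 < s))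
        ((P.filter (fun c => c.2 = j ∧ s + d ≤ c.1)).image (fun c => (c.1 - (d:ℤ), c.2))) := by
      rw [Finset.disjoint_left]
      rintro x hx hx'
      simp only [Finset.mem_filter, Finset.mem_image] at hx hx'
      obtain ⟨c, ⟨hcP, hcj, hcs⟩, hce⟩ := hx'
      have : x.1 = c.1 - d := by rw [← hce]
      omega
    rw [colCount, key2 j, Finset.card_union_of_disjoint hdisj,
      Finset.card_image_of_injective _ (shift_inj d)]
    have e1 : P.filter (fun c => c.2 = j) =
        ((P.filter (fun c => c.2 = j ∧ c.1 < s)) ∪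
         (P.filter (fun c => c.2 = j ∧ s ≤ c.1 ∧ c.1 < s + d))) ∪
        (P.filter (fun c => c.2 = j ∧ s + d ≤ c.1)) := by
      ext c
      simp only [Finset.mem_union, Finset.mem_filter]
      constructor
      · rintro ⟨h1, h2⟩
        rcases lt_or_ge c.1 s with h | h
        · exact Or.inl (Or.inl ⟨h1, h2, h⟩)
        · rcases lt_or_ge c.1 (s + (d:ℤ)) with h' | h'
          · exact Or.inl (Or.inr ⟨h1, h2, h, h'⟩)
          · exact Or.inr ⟨h1, h2, h'⟩
      · rintro ((⟨h1, h2, _⟩ | ⟨h1, h2, _⟩) | ⟨h1, h2, _⟩) <;> exact ⟨h1, h2⟩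
    have d1 : Disjoint (P.filter (fun c => c.2 = j ∧ c.1 < s))
        (P.filter (fun c => c.2 = j ∧ s ≤ c.1 ∧ c.1 < s + d)) := by
      rw [Finset.disjoint_left]
      intro x hx hx'
      simp only [Finset.mem_filter] at hx hx'
      omega
    have d2 : Disjoint ((P.filter (fun c => c.2 = j ∧ c.1 < s)) ∪
        (P.filter (fun c => c.2 = j ∧ s ≤ c.1 ∧ c.1 < s + d)))
        (P.filter (fun c => c.2 = j ∧ s + d ≤ c.1)) := by
      rw [Finset.disjoint_left]
      intro x hx hx'
      simp only [Finset.mem_union, Finset.mem_filter] at hx hx'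
      omega
    have hsplit1 : (P.filter (fun c => c.2 = j)).card =
        ((P.filter (fun c => c.2 = j ∧ c.1 < s)).card +
         (P.filter (fun c => c.2 = j ∧ s ≤ c.1 ∧ c.1 < s + d)).card) +
        (P.filter (fun c => c.2 = j ∧ s + d ≤ c.1)).card := by
      rw [e1, Finset.card_union_of_disjoint d2, Finset.card_union_of_disjoint d1]
    have hmidcard : (P.filter (fun c => c.2 = j ∧ s ≤ c.1 ∧ c.1 < s + d)).card = d := by
      rw [hmid j hj, Finset.card_image_of_injective, Int.card_Ico]
      · omega
      · rintro a b hab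
        simpa using congrArg Prod.fst hab
    rw [colCount] at *
    omega
  -- columns of P'
  have hcolsub : P'.image Prod.snd ⊆ P.image Prod.snd := by
    intro j hj
    obtain ⟨x, hx, rfl⟩ := Finset.mem_image.mp hj
    rw [hQeq] at hx
    simp only [Finset.mem_union, Finset.mem_filter, Finset.mem_image] at hx
    rcases hx with ⟨hxP, _⟩ | ⟨c, ⟨hcP, _⟩, hce⟩
    · exact Finset.mem_image_of_mem _ hxP
    · have : x.2 = c.2 := by rw [← hce]
      rw [this]
      exact Finset.mem_image_of_mem _ hcP
  have hcols' : P'.image Prod.snd = (P.image Prod.snd).filter (fun j => d < colCount P j) := by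
    ext j
    simp only [Finset.mem_filter]
    constructor
    · intro hj
      have hjP : j ∈ P.image Prod.snd := hcolsub hj
      have := hcc j hjP
      have hne := (mem_cols_iff P' j).mp hj
      exact ⟨hjP, by omega⟩
    · rintro ⟨hjP, hlt⟩
      have := hcc j hjP
      rw [mem_cols_iff]
      omega
  have hcolm : colMultiset P' =
      ((colMultiset P).filter (fun m => d < m)).map (fun m => m - d) := by
    rw [colMultiset, hcols', Finset.filter_val]
    have : ∀ j ∈ (P.image Prod.snd).val.filter (fun j => d < colCount P j),
        colCount P' j = (fun j => colCount P j - d) j := by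
      intro j hj
      rw [Multiset.mem_filter] at hj
      have := hcc j hj.1
      show colCount P' j = colCount P j - d
      omega
    rw [Multiset.map_congr rfl this]
    have heq : ((P.image Prod.snd).val.filter (fun j => d < colCount P j)).map
        ((fun m => m - d) ∘ colCount P)
        = (((P.image Prod.snd).val.map (colCount P)).filter (fun m => d < m)).map
          (fun m => m - d) := by
      rw [Multiset.filter_map, Multiset.map_map]
      rfl
    exact heq
  -- rows of P'
  set φ : ℤ → ℤ := fun i => if i < s then i else i - d with hφdef
  set A : Finset ℤ := (P.image Prod.fst).filter (fun i => rowCount P i ≠ w) with hAdef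
  have hAlt : ∀ i ∈ A, i < s ∨ s + d ≤ i := by
    intro i hi
    rw [hAdef, Finset.mem_filter] at hi
    by_contra hcon
    push_neg at hcon
    exact hi.2 (hfull i (by omega) (by omega))
  have hrows' : P'.image Prod.fst = A.image φ := by
    ext j
    rw [mem_rows_iff, hrc j]
    constructor
    · intro hne
      split_ifs at hne with hj
      · refine Finset.mem_image.mpr ⟨j, ?_, if_pos hj⟩
        rw [hAdef, Finset.mem_filter, mem_rows_iff]
        exact ⟨hne, Nat.ne_of_lt (hless j (Or.inl hj))⟩
      · refine Finset.mem_image.mpr ⟨j + d, ?_, ?_⟩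
        · rw [hAdef, Finset.mem_filter, mem_rows_iff]
          exact ⟨hne, Nat.ne_of_lt (hless (j + d) (Or.inr (by omega)))⟩
        · rw [hφdef]
          simp only [if_neg (show ¬ (j + (d:ℤ) < s) by omega)]
          omega
    · intro hj
      obtain ⟨i, hiA, rfl⟩ := Finset.mem_image.mp hj
      have hior := hAlt i hiA
      rw [hAdef, Finset.mem_filter, mem_rows_iff] at hiA
      rcases hior with hlt | hge
      · simp only [hφdef, if_pos hlt]
        exact hiA.1
      · have hns : ¬ i < s := by omega
        simp only [hφdef, if_neg hns]
        rw [if_neg (show ¬ (i - (d:ℤ) < s) by omega), show i - (d:ℤ) + d = i by omega]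
        exact hiA.1
  have hφinj : Set.InjOn φ A := by
    intro a ha b hb hab
    have ha' := hAlt a ha
    have hb' := hAlt b hb
    rw [hφdef] at hab
    simp only at hab
    split_ifs at hab <;> omega
  have hrowm : rowMultiset P' = (rowMultiset P).filter (fun m => m ≠ w) := by
    rw [rowMultiset, hrows', Finset.image_val_of_injOn hφinj]
    rw [Multiset.map_map]
    have : ∀ i ∈ A.val, (rowCount P' ∘ φ) i = rowCount P i := by
      intro i hi
      have hior := hAlt i (by exact hi)
      simp only [Function.comp, hφdef]
      rcases hior with hlt | hge
      · rw [if_pos hlt, hrc, if_pos hlt]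
      · rw [if_neg (show ¬ i < s by omega), hrc,
          if_neg (show ¬ (i - (d:ℤ) < s) by omega)]
        congr 1
        omega
    rw [Multiset.map_congr rfl this]
    rw [hAdef, Finset.filter_val, rowMultiset]
    exact (Multiset.filter_map (fun m => m ≠ w) (rowCount P) (P.image Prod.fst).val).symm
  -- d is the multiplicity of w
  have hdcount : (rowMultiset P).count w = d := by
    rw [rowMultiset, Multiset.count_map]
    have : (P.image Prod.fst).val.filter (fun i => w = rowCount P i) =
        ((P.image Prod.fst).filter (fun i => w = rowCount P i)).val := by
      rw [Finset.filter_val]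
    rw [this]
    have heqI : (P.image Prod.fst).filter (fun i => w = rowCount P i) =
        Finset.Ico s (s + (d:ℤ)) := by
      ext i
      simp only [Finset.mem_filter, Finset.mem_Ico, mem_rows_iff]
      constructor
      · rintro ⟨hne, heq⟩
        by_contra hcon
        push_neg at hcon
        have : rowCount P i < w := by
          rcases lt_or_ge i s with h | h
          · exact hless i (Or.inl h)
          · exact hless i (Or.inr (hcon h))
        omega
      · rintro ⟨h1, h2⟩
        have := hfull i h1 h2
        constructor
        · omega
        · omega
    rw [heqI]
    have : Multiset.card (Finset.Ico s (s + (d:ℤ))).val = (Finset.Ico s (s + (d:ℤ))).card := rfl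
    rw [this, Int.card_Ico]
    omega
  rw [hcardw, hdcount]
  exact ⟨hrowm, hcolm⟩


lemma not_derivedStep_empty (X : Finset (ℤ × ℤ)) : ¬ DerivedStep ∅ X := by
  rintro ⟨s, d, hd0, hfull, hless, hQeq⟩
  have := hless (s - 1) (Or.inl (by omega))
  simp [rowCount] at this

lemma eq_empty_of_rowMultiset (X : Finset (ℤ × ℤ)) (h : rowMultiset X = 0) : X = ∅ := by
  by_contra hne
  obtain ⟨x, hx⟩ := Finset.nonempty_iff_ne_empty.mpr hne
  have : x.1 ∈ X.image Prod.fst := Finset.mem_image_of_mem _ hx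
  have hmem : rowCount X x.1 ∈ rowMultiset X := Multiset.mem_map_of_mem _ (by exact this)
  rw [h] at hmem
  exact Multiset.notMem_zero _ hmem


lemma mem_ferrer_s13 {n : ℕ} {h : ℕ → ℕ} {x : ℤ × ℤ} :
    x ∈ ferrerCellsZ n h ↔ 0 ≤ x.1 ∧ x.1 < n ∧ 0 ≤ x.2 ∧ x.2 < h x.1.toNat := by
  simp only [ferrerCellsZ, Finset.mem_biUnion, Finset.mem_range, Finset.mem_image]
  constructor
  · rintro ⟨a, ha, b, hb, rfl⟩
    simp only
    refine ⟨by positivity, by exact_mod_cast ha, by positivity, ?_⟩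
    rw [Int.toNat_natCast]
    exact_mod_cast hb
  · rintro ⟨h1, h2, h3, h4⟩
    refine ⟨x.1.toNat, by omega, x.2.toNat, by omega, ?_⟩
    rw [Int.toNat_of_nonneg h1, Int.toNat_of_nonneg h3]

lemma rowCount_ferrer (n : ℕ) (h : ℕ → ℕ) (i : ℤ) :
    rowCount (ferrerCellsZ n h) i = if 0 ≤ i ∧ i < n then h i.toNat else 0 := by
  split_ifs with hi
  · rw [rowCount]
    have : (ferrerCellsZ n h).filter (fun c => c.1 = i) =
        (Finset.range (h i.toNat)).image (fun b : ℕ => (i, (b : ℤ))) := by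
      ext x
      simp only [Finset.mem_filter, mem_ferrer_s13, Finset.mem_image, Finset.mem_range]
      constructor
      · rintro ⟨⟨h1, h2, h3, h4⟩, h5⟩
        refine ⟨x.2.toNat, by rw [← h5]; omega, ?_⟩
        rw [Int.toNat_of_nonneg h3, ← h5]
      · rintro ⟨b, hb, rfl⟩
        simp only [Int.toNat_natCast]
        exact ⟨⟨hi.1, hi.2, by positivity, by simpa using hb⟩, trivial⟩
    rw [this, Finset.card_image_of_injective, Finset.card_range]
    intro a b hab
    simpa using congrArg Prod.snd hab
  · rw [rowCount, Finset.card_eq_zero, Finset.filter_eq_empty_iff]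
    intro x hx
    rw [mem_ferrer_s13] at hx
    intro hcon
    omega

lemma ferrer_step {Q Q' : Finset (ℤ × ℤ)} {n : ℕ} {h : ℕ → ℕ}
    (hmono : ∀ i j : ℕ, i ≤ j → j < n → h j ≤ h i) (hpos : ∀ i, i < n → 0 < h i)
    (hQ : Q = ferrerCellsZ n h) (hstep : DerivedStep Q Q') :
    ∃ (n' : ℕ) (h' : ℕ → ℕ), (∀ i j : ℕ, i ≤ j → j < n' → h' j ≤ h' i) ∧
      (∀ i, i < n' → 0 < h' i) ∧ Q' = ferrerCellsZ n' h' := by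
  obtain ⟨s, d, hd0, hfull, hless, hQeq⟩ := hstep
  set w := (Q.image Prod.snd).card with hwdef
  have hw : 0 < w := Nat.lt_of_le_of_lt (Nat.zero_le _) (hless (s - 1) (Or.inl (by omega)))
  have hrc : ∀ i : ℤ, rowCount Q i = if 0 ≤ i ∧ i < n then h i.toNat else 0 := by
    intro i; rw [hQ]; exact rowCount_ferrer n h i
  have hs_range : 0 ≤ s ∧ s < n ∧ h s.toNat = w := by
    have h1 := hfull s (le_refl s) (by omega)
    rw [hrc s] at h1
    split_ifs at h1 with hc
    · exact ⟨hc.1, hc.2, h1⟩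
    · omega
  have hn : 0 < n := by omega
  have hs0 : s = 0 := by
    by_contra hcon
    have hspos : 0 < s := by omega
    have h2 := hless 0 (Or.inl hspos)
    rw [hrc 0, if_pos (by constructor <;> omega)] at h2
    have h3 : h s.toNat ≤ h 0 := hmono 0 s.toNat (Nat.zero_le _) (by omega)
    simp only [Int.toNat_zero] at h2
    omega
  have hdn : d ≤ n := by
    have h1 := hfull (s + d - 1) (by omega) (by omega)
    rw [hrc] at h1
    split_ifs at h1 with hc
    · omega
    · omega
  refine ⟨n - d, fun i => h (i + d), ?_, ?_, ?_⟩
  · intro i j hij hj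
    exact hmono (i + d) (j + d) (by omega) (by omega)
  · intro i hi
    exact hpos (i + d) (by omega)
  · rw [hQeq, hs0]
    ext x
    simp only [Finset.mem_union, Finset.mem_filter, Finset.mem_image, mem_ferrer_s13, hQ]
    constructor
    · rintro (⟨⟨h1, h2, h3, h4⟩, h5⟩ | ⟨c, ⟨⟨h1, h2, h3, h4⟩, h5⟩, h6⟩)
      · omega
      · have hx1 : x.1 = c.1 - d := by rw [← h6]
        have hx2 : x.2 = c.2 := by rw [← h6]
        have ht : x.1.toNat + d = c.1.toNat := by omega
        refine ⟨by omega, by push_cast; omega, by omega, ?_⟩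
        rw [← ht, ← hx2] at h4
        exact h4
    · rintro ⟨h1, h2, h3, h4⟩
      refine Or.inr ⟨(x.1 + d, x.2), ⟨⟨by omega, ?_, h3, ?_⟩, by simpa using h1⟩, ?_⟩
      · simp only
        push_cast at h2 ⊢
        omega
      · simp only
        have : (x.1 + (d:ℤ)).toNat = x.1.toNat + d := by omega
        rw [this]
        exact h4
      · simp only
        refine Prod.ext ?_ rfl
        simp only
        omega

/-- Let `P` be an L-convex polyomino with derived sequence `Ps 0 = P, …, Ps t`
(each step deletes the maximal rectangle of full width; the step after `Ps t`
yields `∅`), and let `Qs` be the derived sequence of a projected Ferrer diagram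
`Qs 0` of `P`, ending after `t'` steps. Then `t' = t` and for every `k ≤ t` the
`k`-th term `Qs k` is the Ferrer diagram projected by `Ps k`. -/
theorem stmt13 (P : Finset (ℤ × ℤ)) (hne : P.Nonempty) (hP : IsLConvex P)
    (Ps Qs : ℕ → Finset (ℤ × ℤ)) (t t' : ℕ)
    (hP0 : Ps 0 = P) (hQ0 : IsProjectedFerrerOf P (Qs 0))
    (hPstep : ∀ k, k < t → DerivedStep (Ps k) (Ps (k + 1)))
    (hPend : DerivedStep (Ps t) ∅)
    (hQstep : ∀ k, k < t' → DerivedStep (Qs k) (Qs (k + 1)))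
    (hQend : DerivedStep (Qs t') ∅) :
    t' = t ∧ ∀ k, k ≤ t → IsProjectedFerrerOf (Ps k) (Qs k) := by
  have hInv : ∀ k, k ≤ min t t' →
      rowMultiset (Qs k) = rowMultiset (Ps k) ∧ colMultiset (Qs k) = colMultiset (Ps k) ∧
      ∃ (n : ℕ) (h : ℕ → ℕ), (∀ i j : ℕ, i ≤ j → j < n → h j ≤ h i) ∧
        (∀ i, i < n → 0 < h i) ∧ Qs k = ferrerCellsZ n h := by
    intro k
    induction k with
    | zero =>
      intro _
      obtain ⟨hf, hr, hc⟩ := hQ0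
      exact ⟨by rw [hr, hP0], by rw [hc, hP0], hf⟩
    | succ k ih =>
      intro hk
      obtain ⟨hr, hc, hf⟩ := ih (by omega)
      have hPs := hPstep k (by omega)
      have hQs := hQstep k (by omega)
      obtain ⟨hrP, hcP⟩ := derived_facts hPs
      obtain ⟨hrQ, hcQ⟩ := derived_facts hQs
      obtain ⟨n, h, hm, hp, hq⟩ := hf
      refine ⟨?_, ?_, ferrer_step hm hp hq hQs⟩
      · rw [hrQ, hrP, hr, hc]
      · rw [hcQ, hcP, hr, hc]
  have htt : t' = t := by
    by_contra hne
    rcases Nat.lt_or_ge t' t with hlt | hge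
    · obtain ⟨hr, hc, _⟩ := hInv t' (by omega)
      obtain ⟨hrP, _⟩ := derived_facts (hPstep t' hlt)
      obtain ⟨hrQ, _⟩ := derived_facts hQend
      have hz : rowMultiset (Ps (t' + 1)) = 0 := by
        rw [hrP, ← hr, ← hc, ← hrQ]
        simp [rowMultiset]
      have hPe : Ps (t' + 1) = ∅ := eq_empty_of_rowMultiset _ hz
      rcases Nat.lt_or_ge (t' + 1) t with h2 | h2
      · exact not_derivedStep_empty _ (hPe ▸ hPstep (t' + 1) h2)
      · have h3 : t' + 1 = t := by omega
        exact not_derivedStep_empty _ (hPe ▸ h3 ▸ hPend)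
    · have hlt : t < t' := by omega
      obtain ⟨hr, hc, _⟩ := hInv t (by omega)
      obtain ⟨hrQ, _⟩ := derived_facts (hQstep t hlt)
      obtain ⟨hrP, _⟩ := derived_facts hPend
      have hz : rowMultiset (Qs (t + 1)) = 0 := by
        rw [hrQ, hr, hc, ← hrP]
        simp [rowMultiset]
      have hQe : Qs (t + 1) = ∅ := eq_empty_of_rowMultiset _ hz
      rcases Nat.lt_or_ge (t + 1) t' with h2 | h2
      · exact not_derivedStep_empty _ (hQe ▸ hQstep (t + 1) h2)
      · have h3 : t + 1 = t' := by omega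
        exact not_derivedStep_empty _ (hQe ▸ h3 ▸ hQend)
  refine ⟨htt, fun k hk => ?_⟩
  obtain ⟨hr, hc, hf⟩ := hInv k (by omega)
  exact ⟨hf, hr, hc⟩
end
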